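/- arXiv:1908.09617 — 7 statements merged into one kernel-verified Lean document; each statement's English description precedes it below -/
import Mathlib

section
/- Suppose B ∈ ℝ[z,z⁻¹]^{n×n} admits a factorization B = B₋ B₊ where B₋ is a polynomial matrix in z⁻¹ with B₋(z) invertible for all |z| ≥ 1 and lim_{z→∞} B₋(z) = I_n, and B₊ is a polynomial matrix in z with B₊(z) invertible for all |z| ≤ 1. Then the lowest power of z appearing in B₋ equals the lowest power of z appearing in B, and the highest power of z appearing in B₊ equals the highest power of z appearing in B. -/
/-!
Only the constant terms matter. Since `B₊` has no negative powers, the lowest coefficient of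
`B = B₋ B₊` is `B₋(μ) B₊(0)`, where `μ` is the lowest degree of `B₋`; it is non-zero because
`B₊(0)` is invertible. Symmetrically, since `B₋` has no positive powers, the highest coefficient
of `B` is `B₋(0) B₊(ν) = B₊(ν)`, where `ν` is the highest degree of `B₊`.
-/

open Finset

theorem Matrix.isUnit_of_isUnit_map {K L n : Type*} [Field K] [Field L] [Fintype n]
    [DecidableEq n] (φ : K →+* L) {M : Matrix n n K} (h : IsUnit (M.map φ)) : IsUnit M := by
  rw [Matrix.isUnit_iff_isUnit_det] at h ⊢
  rwa [← RingHom.mapMatrix_apply, ← RingHom.map_det, isUnit_map_iff] at h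

theorem sum_Icc_zero_zpow_smul {K M : Type*} [DivisionSemiring K] [AddCommMonoid M] [Module K M]
    {k : ℤ} (hk : 0 ≤ k) (v : ℤ → M) : ∑ i ∈ Icc 0 k, (0 : K) ^ i • v i = v 0 := by
  rw [sum_eq_single_of_mem 0 (mem_Icc.mpr ⟨le_rfl, hk⟩), zpow_zero, one_smul]
  intro i _ hi
  rw [zero_zpow i hi, zero_smul]

theorem Int.isLeast_iff_of_isLeast_imp {S T : Set ℤ} (hS : BddBelow S)
    (hTS : T.Nonempty → S.Nonempty) (h : ∀ μ, IsLeast S μ → IsLeast T μ) (μ : ℤ) :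
    IsLeast S μ ↔ IsLeast T μ := by
  refine ⟨h μ, fun hT => ?_⟩
  obtain ⟨b, hb⟩ := hS
  obtain ⟨μ₀, hμ₀⟩ := Int.exists_least_of_bdd ⟨b, fun _ hz => hb hz⟩ (hTS hT.nonempty)
  rwa [hT.unique (h μ₀ hμ₀)]

theorem Int.isGreatest_iff_of_isGreatest_imp {S T : Set ℤ} (hS : BddAbove S)
    (hTS : T.Nonempty → S.Nonempty) (h : ∀ ν, IsGreatest S ν → IsGreatest T ν) (ν : ℤ) :
    IsGreatest S ν ↔ IsGreatest T ν := by
  refine ⟨h ν, fun hT => ?_⟩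
  obtain ⟨b, hb⟩ := hS
  obtain ⟨ν₀, hν₀⟩ := Int.exists_greatest_of_bdd ⟨b, fun _ hz => hb hz⟩ (hTS hT.nonempty)
  rwa [hT.unique (h ν₀ hν₀)]

section Convolution

variable {R : Type*} [Semiring R] (s : Finset ℤ) (f g : ℤ → R)

theorem nonempty_support_of_sum_mul_sub_ne_zero {i : ℤ} (h : ∑ j ∈ s, f j * g (i - j) ≠ 0) :
    {j | f j ≠ 0}.Nonempty ∧ {k | g k ≠ 0}.Nonempty := by
  obtain ⟨j, -, hj⟩ := exists_ne_zero_of_sum_ne_zero h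
  exact ⟨⟨j, left_ne_zero_of_mul hj⟩, ⟨i - j, right_ne_zero_of_mul hj⟩⟩

variable {s f g} {a b : ℤ}

section LowerBounds

variable (hf : a ∈ lowerBounds {j | f j ≠ 0}) (hg : b ∈ lowerBounds {k | g k ≠ 0})
include hf hg

theorem sum_mul_sub_eq_zero_of_lt {i : ℤ} (hi : i < a + b) :
    ∑ j ∈ s, f j * g (i - j) = 0 :=
  sum_eq_zero fun j _ => mul_eq_zero_of_ne_zero_imp_eq_zero fun hj => by
    by_contra hk
    have := hf hj
    have := hg hk
    omega

theorem sum_mul_sub_add_eq_of_lowerBounds (ha : a ∈ s) :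
    ∑ j ∈ s, f j * g (a + b - j) = f a * g b := by
  rw [sum_eq_single_of_mem a ha, add_sub_cancel_left]
  refine fun j _ hja => mul_eq_zero_of_ne_zero_imp_eq_zero fun hj => ?_
  by_contra hk
  have := hf hj
  have := hg hk
  omega

end LowerBounds

section UpperBounds

variable (hf : a ∈ upperBounds {j | f j ≠ 0}) (hg : b ∈ upperBounds {k | g k ≠ 0})
include hf hg

theorem sum_mul_sub_eq_zero_of_gt {i : ℤ} (hi : a + b < i) :
    ∑ j ∈ s, f j * g (i - j) = 0 :=
  sum_eq_zero fun j _ => mul_eq_zero_of_ne_zero_imp_eq_zero fun hj => by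
    by_contra hk
    have := hf hj
    have := hg hk
    omega

theorem sum_mul_sub_add_eq_of_upperBounds (ha : a ∈ s) :
    ∑ j ∈ s, f j * g (a + b - j) = f a * g b := by
  rw [sum_eq_single_of_mem a ha, add_sub_cancel_left]
  refine fun j _ hja => mul_eq_zero_of_ne_zero_imp_eq_zero fun hj => ?_
  by_contra hk
  have := hf hj
  have := hg hk
  omega

end UpperBounds

theorem isLeast_support_sum_mul_sub (ha : IsLeast {j | f j ≠ 0} a) (has : a ∈ s)
    (hg : b ∈ lowerBounds {k | g k ≠ 0}) (hgb : IsUnit (g b)) :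
    IsLeast {i | ∑ j ∈ s, f j * g (i - j) ≠ 0} (a + b) := by
  refine ⟨?_, fun i hi => ?_⟩
  · rw [Set.mem_ofPred_eq, sum_mul_sub_add_eq_of_lowerBounds ha.2 hg has, Ne,
      hgb.mul_left_eq_zero]
    exact ha.1
  · by_contra! hlt
    exact hi (sum_mul_sub_eq_zero_of_lt ha.2 hg hlt)

theorem isGreatest_support_sum_mul_sub (hf : a ∈ upperBounds {j | f j ≠ 0}) (has : a ∈ s)
    (hfa : IsUnit (f a)) (hb : IsGreatest {k | g k ≠ 0} b) :
    IsGreatest {i | ∑ j ∈ s, f j * g (i - j) ≠ 0} (a + b) := by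
  refine ⟨?_, fun i hi => ?_⟩
  · rw [Set.mem_ofPred_eq, sum_mul_sub_add_eq_of_upperBounds hf hb.2 has, Ne,
      hfa.mul_right_eq_zero]
    exact hb.1
  · by_contra! hlt
    exact hi (sum_mul_sub_eq_zero_of_gt hf hb.2 hlt)

end Convolution

theorem stmt3_general {n lam kap : ℕ}
    (Bm Bp B : ℤ → Matrix (Fin n) (Fin n) ℝ)
    -- `B₋` is a polynomial matrix in `z⁻¹` (support in `[-λ, 0]`)
    (hBmsupp : ∀ i : ℤ, Bm i ≠ 0 → -(lam : ℤ) ≤ i ∧ i ≤ 0)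
    -- `B₊` is a polynomial matrix in `z` (support in `[0, κ]`)
    (hBpsupp : ∀ i : ℤ, Bp i ≠ 0 → 0 ≤ i ∧ i ≤ (kap : ℤ))
    -- `lim_{z→∞} B₋(z) = I`
    (hBm0 : Bm 0 = 1)
    -- `B₊(z)` invertible for all `|z| ≤ 1`
    (hBpinv : ∀ z : ℂ, ‖z‖ ≤ 1 →
      IsUnit (∑ i ∈ Finset.Icc (0 : ℤ) (kap : ℤ), z ^ i • (Bp i).map (algebraMap ℝ ℂ)))
    -- `B = B₋ B₊`
    (hB : ∀ i : ℤ, B i = ∑ j ∈ Finset.Icc (-(lam : ℤ)) 0, Bm j * Bp (i - j)) :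
    (∀ μ : ℤ, IsLeast {i | Bm i ≠ 0} μ ↔ IsLeast {i | B i ≠ 0} μ) ∧
    (∀ ν : ℤ, IsGreatest {i | Bp i ≠ 0} ν ↔ IsGreatest {i | B i ≠ 0} ν) := by
  have hBp0 : IsUnit (Bp 0) := Matrix.isUnit_of_isUnit_map (algebraMap ℝ ℂ) <| by
    simpa [sum_Icc_zero_zpow_smul] using hBpinv 0 (by simp)
  have hBm_mem : ∀ j, Bm j ≠ 0 → j ∈ Icc (-(lam : ℤ)) 0 := fun j hj => mem_Icc.mpr (hBmsupp j hj)
  have hB_supp : {i | B i ≠ 0} = {i | ∑ j ∈ Icc (-(lam : ℤ)) 0, Bm j * Bp (i - j) ≠ 0} := by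
    simp only [hB]
  rw [hB_supp]
  constructor
  · refine Int.isLeast_iff_of_isLeast_imp ⟨-lam, fun j hj => (hBmsupp j hj).1⟩
      (fun ⟨_, hi⟩ => (nonempty_support_of_sum_mul_sub_ne_zero _ _ _ hi).1) fun μ hμ => ?_
    simpa using isLeast_support_sum_mul_sub hμ (hBm_mem μ hμ.1)
      (fun k hk => (hBpsupp k hk).1) hBp0
  · refine Int.isGreatest_iff_of_isGreatest_imp ⟨kap, fun k hk => (hBpsupp k hk).2⟩
      (fun ⟨_, hi⟩ => (nonempty_support_of_sum_mul_sub_ne_zero _ _ _ hi).2) fun ν hν => ?_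
    simpa using isGreatest_support_sum_mul_sub (fun j hj => (hBmsupp j hj).2)
      (by simp) (hBm0 ▸ isUnit_one) hν

/-- Wiener–Hopf factorization `B = B₋ B₊` (zero partial indices): the minimum degree of
`B₋` equals that of `B` and the maximum degree of `B₊` equals that of `B`. Laurent
polynomial matrices are encoded by their coefficient functions `ℤ → Matrix`. -/
theorem stmt3 {n lam kap : ℕ}
    (Bm Bp B : ℤ → Matrix (Fin n) (Fin n) ℝ)
    -- `B₋` is a polynomial matrix in `z⁻¹` (support in `[-λ, 0]`)
    (hBmsupp : ∀ i : ℤ, Bm i ≠ 0 → -(lam : ℤ) ≤ i ∧ i ≤ 0)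
    -- `B₊` is a polynomial matrix in `z` (support in `[0, κ]`)
    (hBpsupp : ∀ i : ℤ, Bp i ≠ 0 → 0 ≤ i ∧ i ≤ (kap : ℤ))
    -- `lim_{z→∞} B₋(z) = I`
    (hBm0 : Bm 0 = 1)
    -- `B₋(z)` invertible for all `|z| ≥ 1`
    (hBminv : ∀ z : ℂ, 1 ≤ ‖z‖ →
      IsUnit (∑ i ∈ Finset.Icc (-(lam : ℤ)) 0, z ^ i • (Bm i).map (algebraMap ℝ ℂ)))
    -- `B₊(z)` invertible for all `|z| ≤ 1`
    (hBpinv : ∀ z : ℂ, ‖z‖ ≤ 1 →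
      IsUnit (∑ i ∈ Finset.Icc (0 : ℤ) (kap : ℤ), z ^ i • (Bp i).map (algebraMap ℝ ℂ)))
    -- `B = B₋ B₊`
    (hB : ∀ i : ℤ, B i = ∑ j ∈ Finset.Icc (-(lam : ℤ)) 0, Bm j * Bp (i - j)) :
    (∀ μ : ℤ, IsLeast {i | Bm i ≠ 0} μ ↔ IsLeast {i | B i ≠ 0} μ) ∧
    (∀ ν : ℤ, IsGreatest {i | Bp i ≠ 0} ν ↔ IsGreatest {i | B i ≠ 0} ν) :=
  stmt3_general Bm Bp B hBmsupp hBpsupp hBm0 hBpinv hB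
end

section
/- With B₋ and A as above, A⁺ = B₋[B₋⁻¹A]₊ is a Laurent polynomial matrix with min deg(A⁺) ≥ −λ and max deg(A⁺) = deg(A). -/
/-!
At indices `k ≥ κ` the sum defining `Dcoef` has the single term `G₀ A_k`, which vanishes for
`k > κ`; hence at such indices only the `j = 0` term of `Apcoef` survives, and `F₀ G₀ = 1`
makes the coefficient at `κ` equal to `A_κ ≠ 0`. Below `-λ` every term is cut off by the
projection `[·]₊`.
-/

/-- The coefficient at `k ∈ ℕ` of `[B₋⁻¹A]₊`, namely `D k = Σ_i G_i A_{k+i}`. -/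
noncomputable def Dcoef {n m : ℕ} (G : ℕ → Matrix (Fin n) (Fin n) ℝ)
    (A : ℕ → Matrix (Fin n) (Fin m) ℝ) (kap k : ℕ) : Matrix (Fin n) (Fin m) ℝ :=
  ∑ i ∈ Finset.range (kap - k + 1), G i * A (k + i)

/-- The Laurent coefficient of `A⁺ = B₋ [B₋⁻¹A]₊` at `k ∈ ℤ`:
`Σ_{j=0}^λ F_j D_{k+j}` where `D` is supported on nonnegative indices. -/
noncomputable def Apcoef {n m : ℕ} (F : ℕ → Matrix (Fin n) (Fin n) ℝ)
    (G : ℕ → Matrix (Fin n) (Fin n) ℝ) (A : ℕ → Matrix (Fin n) (Fin m) ℝ)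
    (lam kap : ℕ) (k : ℤ) : Matrix (Fin n) (Fin m) ℝ :=
  ∑ j ∈ Finset.range (lam + 1),
    F j * (if 0 ≤ k + (j : ℤ) then Dcoef G A kap (k + (j : ℤ)).toNat else 0)

section

variable {n m : ℕ} (F G : ℕ → Matrix (Fin n) (Fin n) ℝ) (A : ℕ → Matrix (Fin n) (Fin m) ℝ)

theorem Dcoef_of_le {kap k : ℕ} (hk : kap ≤ k) : Dcoef G A kap k = G 0 * A k := by
  simp [Dcoef, Nat.sub_eq_zero_of_le hk]

theorem Apcoef_eq_zero_of_lt_neg (lam kap : ℕ) {k : ℤ} (hk : k < -(lam : ℤ)) :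
    Apcoef F G A lam kap k = 0 :=
  Finset.sum_eq_zero fun j hj => by
    rw [Finset.mem_range] at hj
    rw [if_neg (by omega), Matrix.mul_zero]

theorem Apcoef_natCast_of_le (lam : ℕ) {kap : ℕ} (hA : ∀ i, kap < i → A i = 0) {k : ℕ}
    (hk : kap ≤ k) : Apcoef F G A lam kap k = F 0 * G 0 * A k := by
  rw [Apcoef, Finset.sum_eq_single 0]
  · simp [Dcoef_of_le G A hk, Matrix.mul_assoc]
  · intro j _ hj
    have hkj : ((k : ℤ) + j).toNat = k + j := by omega
    rw [if_pos (by positivity), hkj, Dcoef_of_le G A (by omega), hA _ (by omega),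
      Matrix.mul_zero, Matrix.mul_zero]
  · simp

end

theorem stmt6_general {n m lam kap : ℕ}
    (F : ℕ → Matrix (Fin n) (Fin n) ℝ)
    (G : ℕ → Matrix (Fin n) (Fin n) ℝ)
    (hG : ∀ k : ℕ, ∑ j ∈ Finset.range (k + 1), F j * G (k - j)
        = if k = 0 then (1 : Matrix (Fin n) (Fin n) ℝ) else 0)
    (A : ℕ → Matrix (Fin n) (Fin m) ℝ)
    (hA : IsGreatest {k : ℕ | A k ≠ 0} kap) :
    (∀ k : ℤ, Apcoef F G A lam kap k ≠ 0 → -(lam : ℤ) ≤ k) ∧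
    Apcoef F G A lam kap (kap : ℤ) ≠ 0 ∧
    (∀ k : ℤ, (kap : ℤ) < k → Apcoef F G A lam kap k = 0) := by
  have hFG : F 0 * G 0 = 1 := by simpa using hG 0
  have hAz : ∀ i, kap < i → A i = 0 := fun i hi =>
    by_contra fun h => hi.not_ge (hA.2 h)
  refine ⟨fun k hk => ?_, ?_, fun k hk => ?_⟩
  · by_contra! h
    exact hk (Apcoef_eq_zero_of_lt_neg F G A lam kap h)
  · rw [Apcoef_natCast_of_le F G A lam hAz le_rfl, hFG, Matrix.one_mul]
    exact hA.1
  · lift k to ℕ using by omega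
    rw [Apcoef_natCast_of_le F G A lam hAz (by omega), hAz k (by omega), Matrix.mul_zero]

/-- `A⁺ = B₋ [B₋⁻¹A]₊` is a Laurent polynomial matrix with
`min deg(A⁺) ≥ -λ` and `max deg(A⁺) = deg A = κ`. -/
theorem stmt6 {n m lam kap : ℕ}
    (F : ℕ → Matrix (Fin n) (Fin n) ℝ) (hF0 : F 0 = 1)
    (hFsupp : ∀ j : ℕ, lam < j → F j = 0)
    (hFinv : ∀ z : ℂ, 1 ≤ ‖z‖ →
      IsUnit (∑ j ∈ Finset.range (lam + 1), (z ^ (-(j : ℤ))) • (F j).map (algebraMap ℝ ℂ)))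
    (G : ℕ → Matrix (Fin n) (Fin n) ℝ)
    (hG : ∀ k : ℕ, ∑ j ∈ Finset.range (k + 1), F j * G (k - j)
        = if k = 0 then (1 : Matrix (Fin n) (Fin n) ℝ) else 0)
    (A : ℕ → Matrix (Fin n) (Fin m) ℝ)
    (hA : IsGreatest {k : ℕ | A k ≠ 0} kap) :
    (∀ k : ℤ, Apcoef F G A lam kap k ≠ 0 → -(lam : ℤ) ≤ k) ∧
    Apcoef F G A lam kap (kap : ℤ) ≠ 0 ∧
    (∀ k : ℤ, (kap : ℤ) < k → Apcoef F G A lam kap k = 0) :=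
  stmt6_general F G hG A hA
end

section
/- The set of n×m real matrices of full column rank m that are in canonical quasi-lower triangular form is path-connected: every such matrix is connected by a straight-line path within the set to the matrix [I_m; 0_{(n−m)×m}]. -/
/-- `C` is canonical quasi-lower triangular: there are rows `i_1 < … < i_m` such that
for each column `j`, the first non-zero entry of column `j` is positive and lies in row `i_j`. -/
def QLT {n m : ℕ} (C : Matrix (Fin n) (Fin m) ℝ) : Prop :=
  ∃ idx : Fin m → Fin n, StrictMono idx ∧
    ∀ j : Fin m, 0 < C (idx j) j ∧ ∀ i : Fin n, i < idx j → C i j = 0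

/-- The `n×m` matrix `[I_m ; 0]`. -/
def Ecan (n m : ℕ) : Matrix (Fin n) (Fin m) ℝ :=
  Matrix.of fun i j => if (i : ℕ) = (j : ℕ) then 1 else 0

/-- A strictly monotone map of `Fin`s satisfies `j ≤ f j` (as naturals). -/
lemma strictMono_fin_le {n m : ℕ} {f : Fin m → Fin n} (hf : StrictMono f) (j : Fin m) :
    (j : ℕ) ≤ (f j : ℕ) := by
  obtain ⟨k, hk⟩ := j
  induction k with
  | zero => exact Nat.zero_le _
  | succ k ih =>
    have hk' : k < m := Nat.lt_of_succ_lt hk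
    have h1 : f ⟨k, hk'⟩ < f ⟨k + 1, hk⟩ := hf (by simp [Fin.lt_def])
    have h2 := ih hk'
    have h3 : (f ⟨k, hk'⟩ : ℕ) < (f ⟨k + 1, hk⟩ : ℕ) := h1
    simp only [Fin.val_mk] at h2 h3 ⊢
    omega

/-- A QLT matrix has full column rank. -/
lemma QLT.rank_eq {n m : ℕ} {C : Matrix (Fin n) (Fin m) ℝ} (h : QLT C) : C.rank = m := by
  obtain ⟨idx, hmono, hcol⟩ := h
  refine le_antisymm (by simpa using C.rank_le_card_width) ?_
  -- the square submatrix on rows `idx j` is lower triangular with positive diagonal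
  set M : Matrix (Fin m) (Fin m) ℝ := C.submatrix idx id with hM
  have htri : M.BlockTriangular OrderDual.toDual := by
    intro i j hij
    have hij' : i < j := hij
    exact (hcol j).2 (idx i) (hmono hij')
  have hdet : M.det = ∏ i : Fin m, M i i := Matrix.det_of_lowerTriangular M htri
  have hdetpos : 0 < M.det := by
    rw [hdet]
    exact Finset.prod_pos fun i _ => (hcol i).1
  have hunit : IsUnit M := by
    rw [Matrix.isUnit_iff_isUnit_det]
    exact isUnit_iff_ne_zero.2 hdetpos.ne'
  have hMrank : M.rank = m := by
    simpa using Matrix.rank_of_isUnit M hunit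
  have hPmul : ((1 : Matrix (Fin n) (Fin n) ℝ).submatrix idx (Equiv.refl (Fin n))) * C = M := by
    rw [Matrix.one_submatrix_mul]
    rfl
  calc (m : ℕ) = M.rank := hMrank.symm
    _ ≤ C.rank := by rw [← hPmul]; exact Matrix.rank_mul_le_right _ _
  
/-- Segment preservation lemma. -/
lemma qlt_segment {n m : ℕ} (hnm : m ≤ n) {C : Matrix (Fin n) (Fin m) ℝ} (hq : QLT C)
    {t : ℝ} (ht : t ∈ Set.Icc (0 : ℝ) 1) : QLT (t • C + (1 - t) • Ecan n m) := by
  obtain ⟨ht0, ht1⟩ := ht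
  obtain ⟨idx, hmono, hcol⟩ := hq
  rcases eq_or_lt_of_le ht1 with rfl | ht1'
  · simpa using ⟨idx, hmono, hcol⟩
  · -- for `t < 1`, the pivot of each column `j` is at row `j`
    refine ⟨Fin.castLE hnm, Fin.strictMono_castLE hnm, fun j => ?_⟩
    have hjle : (j : ℕ) ≤ (idx j : ℕ) := strictMono_fin_le hmono j
    constructor
    · have hE : Ecan n m (Fin.castLE hnm j) j = 1 := by simp [Ecan]
      have hCnn : 0 ≤ C (Fin.castLE hnm j) j := by
        rcases lt_or_eq_of_le hjle with hlt | heq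
        · rw [(hcol j).2 (Fin.castLE hnm j) (by rw [Fin.lt_def]; exact hlt)]
        · have : Fin.castLE hnm j = idx j := by
            apply Fin.ext; simpa using heq
          rw [this]; exact (hcol j).1.le
      have : (0:ℝ) < t * C (Fin.castLE hnm j) j + (1 - t) :=
        add_pos_of_nonneg_of_pos (mul_nonneg ht0 hCnn) (by linarith)
      simpa [hE, Matrix.add_apply, Matrix.smul_apply, smul_eq_mul] using this
    · intro i hi
      have hival : (i : ℕ) < (j : ℕ) := by simpa [Fin.lt_def] using hi
      have hC0 : C i j = 0 := (hcol j).2 i (by rw [Fin.lt_def]; omega)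
      have hE0 : Ecan n m i j = 0 := by simp [Ecan]; omega
      simp [Matrix.add_apply, Matrix.smul_apply, hC0, hE0]

lemma Ecan_qlt {n m : ℕ} (hnm : m ≤ n) : QLT (Ecan n m) := by
  refine ⟨Fin.castLE hnm, Fin.strictMono_castLE hnm, fun j => ?_⟩
  constructor
  · simp [Ecan]
  · intro i hi
    have : (i : ℕ) < (j : ℕ) := by simpa [Fin.lt_def] using hi
    simp [Ecan]; omega

/-- The set of full-column-rank canonical quasi-lower triangular `n×m` matrices is
path-connected: each such `C` is joined to `[I_m ; 0]` by the straight-line segment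
`t C + (1-t)[I_m;0]`, which stays within the set. -/
theorem stmt9 {n m : ℕ} (hnm : m ≤ n) :
    (∀ C : Matrix (Fin n) (Fin m) ℝ, C.rank = m → QLT C →
      ∀ t : ℝ, t ∈ Set.Icc (0 : ℝ) 1 →
        (t • C + (1 - t) • Ecan n m).rank = m ∧ QLT (t • C + (1 - t) • Ecan n m)) ∧
    IsPathConnected {C : Matrix (Fin n) (Fin m) ℝ | C.rank = m ∧ QLT C} := by
  have hseg : ∀ C : Matrix (Fin n) (Fin m) ℝ, C.rank = m → QLT C →
      ∀ t : ℝ, t ∈ Set.Icc (0 : ℝ) 1 →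
        (t • C + (1 - t) • Ecan n m).rank = m ∧ QLT (t • C + (1 - t) • Ecan n m) := by
    intro C _ hq t ht
    have h := qlt_segment hnm hq ht
    exact ⟨h.rank_eq, h⟩
  refine ⟨hseg, ?_⟩
  refine ⟨Ecan n m, ⟨(Ecan_qlt hnm).rank_eq, Ecan_qlt hnm⟩, ?_⟩
  intro C hC
  obtain ⟨hCrank, hCq⟩ := hC
  have hcont : Continuous fun s : unitInterval =>
      (s : ℝ) • C + (1 - (s : ℝ)) • Ecan n m := by
    apply Continuous.add
    · exact (continuous_subtype_val).smul continuous_const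
    · exact (continuous_const.sub continuous_subtype_val).smul continuous_const
  refine ⟨⟨⟨fun s => (s : ℝ) • C + (1 - (s : ℝ)) • Ecan n m, hcont⟩, by simp, by simp⟩,
    fun s => ?_⟩
  exact hseg C hCrank hCq (s : ℝ) s.2
end

section
/- Let (B,A), (B̃,Ã) be pairs with B, B̃ ∈ ℝ^{n×n} invertible and A, Ã ∈ ℝ^{n×m} such that B⁻¹A and B̃⁻¹Ã both have rank m and are canonical quasi-lower triangular. If B̃⁻¹Ã Ã' B̃⁻¹' = B⁻¹ A A' B⁻¹', then B̃⁻¹Ã = B⁻¹A. -/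
open Matrix

lemma my_isUnit_of_rank_eq_card {m : ℕ} (G : Matrix (Fin m) (Fin m) ℝ)
    (h : G.rank = m) : IsUnit G := by
  rw [← Matrix.mulVec_surjective_iff_isUnit]
  have htop : LinearMap.range G.mulVecLin = ⊤ := by
    apply Submodule.eq_top_of_finrank_eq
    rw [Matrix.rank] at h
    rw [h, Module.finrank_fintype_fun_eq_card, Fintype.card_fin]
  intro v
  obtain ⟨w, hw⟩ := LinearMap.range_eq_top.mp htop v
  exact ⟨w, hw⟩

/-- Uniqueness of the canonical quasi-lower triangular factor given an
orthogonal change of basis. -/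
lemma qlt_orth_eq {n m : ℕ} {C D : Matrix (Fin n) (Fin m) ℝ}
    (hC : QLT C) (hD : QLT D) {P : Matrix (Fin m) (Fin m) ℝ}
    (hDP : D = C * P) (hPPt : P * Pᵀ = 1) : D = C := by
  obtain ⟨idx, hmono, hcol⟩ := hC
  obtain ⟨idt, htmono, htcol⟩ := hD
  have hPtP : Pᵀ * P = 1 := mul_eq_one_comm.mp hPPt
  have hCD : C = D * Pᵀ := by rw [hDP, Matrix.mul_assoc, hPPt, Matrix.mul_one]
  set Q : Fin m → Prop := fun j =>
    idt j = idx j ∧ (∀ l, P j l = if j = l then (1:ℝ) else 0)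
      ∧ (∀ l, P l j = if l = j then (1:ℝ) else 0) with hQ
  have key : ∀ N : ℕ, ∀ j : Fin m, (j : ℕ) < N → Q j := by
    intro N
    induction N with
    | zero => intro j hj; omega
    | succ N IHN =>
      intro j hj
      have IH : ∀ l : Fin m, l < j → Q l := fun l hl => IHN l (by
        have : (l : ℕ) < (j : ℕ) := hl
        omega)
      -- Step A: column j of D vanishes above idx j
      have hDzero : ∀ i : Fin n, i < idx j → D i j = 0 := by
        intro i hi
        rw [hDP, Matrix.mul_apply]
        apply Finset.sum_eq_zero
        intro l _
        rcases lt_or_ge l j with hl | hl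
        · rw [(IH l hl).2.1 j, if_neg (Fin.ne_of_lt hl), mul_zero]
        · rw [(hcol l).2 i (lt_of_lt_of_le hi (hmono.monotone hl)), zero_mul]
      -- Step B: column j of C vanishes above idt j
      have hCzero : ∀ i : Fin n, i < idt j → C i j = 0 := by
        intro i hi
        rw [hCD, Matrix.mul_apply]
        apply Finset.sum_eq_zero
        intro l _
        rcases lt_or_ge l j with hl | hl
        · rw [Matrix.transpose_apply, (IH l hl).2.2 j,
            if_neg (Fin.ne_of_gt hl), mul_zero]
        · rw [(htcol l).2 i (lt_of_lt_of_le hi (htmono.monotone hl)), zero_mul]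
      have h1 : idx j ≤ idt j := by
        by_contra hcon
        push_neg at hcon
        exact absurd (hDzero (idt j) hcon) (ne_of_gt (htcol j).1)
      have h2 : idt j ≤ idx j := by
        by_contra hcon
        push_neg at hcon
        exact absurd (hCzero (idx j) hcon) (ne_of_gt (hcol j).1)
      have hij : idt j = idx j := le_antisymm h2 h1
      -- D (idx j) j' = C (idx j) j * P j j'  for j ≤ j'
      have hsum : ∀ j' : Fin m, j ≤ j' → D (idx j) j' = C (idx j) j * P j j' := by
        intro j' hj'
        rw [hDP, Matrix.mul_apply, Finset.sum_eq_single j]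
        · intro l _ hne
          rcases lt_trichotomy l j with hl | hl | hl
          · rw [(IH l hl).2.1 j', if_neg (Fin.ne_of_lt (lt_of_lt_of_le hl hj')),
              mul_zero]
          · exact absurd hl hne
          · rw [(hcol l).2 (idx j) (hmono hl), zero_mul]
        · intro hmem
          exact absurd (Finset.mem_univ j) hmem
      have hCpos : 0 < C (idx j) j := (hcol j).1
      have hPjj : 0 < P j j := by
        have hDpos : 0 < D (idx j) j := hij ▸ (htcol j).1
        have := hsum j le_rfl
        nlinarith
      -- row j of P beyond j is zero
      have hrowgt : ∀ l : Fin m, j < l → P j l = 0 := by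
        intro l hl
        have hDl : D (idx j) l = 0 := by
          apply (htcol l).2
          rw [← hij]
          exact htmono hl
        have := hsum l (le_of_lt hl)
        rw [hDl] at this
        have := this.symm
        rcases mul_eq_zero.mp this with hc | hc
        · exact absurd hc (ne_of_gt hCpos)
        · exact hc
      -- row j of P below j is zero
      have hrowlt : ∀ l : Fin m, l < j → P j l = 0 := by
        intro l hl
        rw [(IH l hl).2.2 j, if_neg (Fin.ne_of_gt hl)]
      -- diagonal entry is 1
      have hnorm : ∑ l, P j l * P j l = 1 := by
        have := congrArg (fun M : Matrix (Fin m) (Fin m) ℝ => M j j) hPPt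
        simpa [Matrix.mul_apply, Matrix.transpose_apply, Matrix.one_apply]
          using this
      have hnorm2 : P j j * P j j = 1 := by
        rw [← hnorm, Finset.sum_eq_single j]
        · intro l _ hne
          rcases lt_or_gt_of_ne hne with hl | hl
          · rw [hrowlt l hl, zero_mul]
          · rw [hrowgt l hl, zero_mul]
        · intro hmem
          exact absurd (Finset.mem_univ j) hmem
      have hPjj1 : P j j = 1 := by
        have h9 : (P j j - 1) * (P j j + 1) = 0 := by nlinarith
        rcases mul_eq_zero.mp h9 with hc | hc
        · linarith
        · linarith
      -- column j of P
      have hcolnorm : ∑ l, P l j * P l j = 1 := by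
        have := congrArg (fun M : Matrix (Fin m) (Fin m) ℝ => M j j) hPtP
        simpa [Matrix.mul_apply, Matrix.transpose_apply, Matrix.one_apply]
          using this
      have hcolzero : ∀ l : Fin m, l ≠ j → P l j = 0 := by
        intro l hl
        have hsplit := Finset.add_sum_erase Finset.univ
          (fun l => P l j * P l j) (Finset.mem_univ j)
        simp only [hcolnorm, hPjj1, one_mul] at hsplit
        have hz : ∑ x ∈ Finset.univ.erase j, P x j * P x j = 0 := by linarith
        have := (Finset.sum_eq_zero_iff_of_nonneg
          (fun x _ => mul_self_nonneg (P x j))).mp hz l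
          (Finset.mem_erase.mpr ⟨hl, Finset.mem_univ l⟩)
        exact mul_self_eq_zero.mp this
      refine ⟨hij, ?_, ?_⟩
      · intro l
        rcases eq_or_ne j l with rfl | hne
        · simpa using hPjj1
        · rw [if_neg hne]
          rcases lt_or_gt_of_ne hne with hl | hl
          · exact hrowgt l hl
          · exact hrowlt l hl
      · intro l
        rcases eq_or_ne l j with rfl | hne
        · simpa using hPjj1
        · rw [if_neg hne]
          exact hcolzero l hne
  have hP1 : P = 1 := by
    ext i l
    rw [(key ((i : ℕ) + 1) i (Nat.lt_succ_self _)).2.1 l, Matrix.one_apply]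
  rw [hDP, hP1, Matrix.mul_one]

lemma qlt_factor_unique {n m : ℕ} (C D : Matrix (Fin n) (Fin m) ℝ)
    (hrC : C.rank = m) (hqC : QLT C) (hqD : QLT D)
    (h : D * Dᵀ = C * Cᵀ) : D = C := by
  set G : Matrix (Fin m) (Fin m) ℝ := Cᵀ * C with hGdef
  have hG : IsUnit G := by
    apply my_isUnit_of_rank_eq_card
    rw [hGdef, Matrix.rank_transpose_mul_self, hrC]
  have hGdet : IsUnit G.det := (Matrix.isUnit_iff_isUnit_det G).mp hG
  have hGinv : G⁻¹ * G = 1 := Matrix.nonsing_inv_mul G hGdet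
  have hGinv' : G * G⁻¹ = 1 := Matrix.mul_nonsing_inv G hGdet
  have hGsymm : Gᵀ = G := by
    rw [hGdef, Matrix.transpose_mul, Matrix.transpose_transpose]
  have hGinvsymm : (G⁻¹)ᵀ = G⁻¹ := by
    rw [Matrix.transpose_nonsing_inv, hGsymm]
  set Pr : Matrix (Fin n) (Fin n) ℝ := C * G⁻¹ * Cᵀ with hPrdef
  have hPrC : Pr * C = C := by
    rw [hPrdef, Matrix.mul_assoc, ← hGdef, Matrix.mul_assoc, hGinv,
      Matrix.mul_one]
  have hPrsymm : Prᵀ = Pr := by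
    rw [hPrdef, Matrix.transpose_mul, Matrix.transpose_mul,
      Matrix.transpose_transpose, hGinvsymm, Matrix.mul_assoc]
  have hPrCC : Pr * (C * Cᵀ) = C * Cᵀ := by
    rw [← Matrix.mul_assoc, hPrC]
  have hCCPr : (C * Cᵀ) * Pr = C * Cᵀ := by
    have := congrArg Matrix.transpose hPrCC
    rwa [Matrix.transpose_mul, Matrix.transpose_mul, hPrsymm,
      Matrix.transpose_transpose] at this
  -- E := D - Pr * D satisfies E * Eᵀ = 0
  set E : Matrix (Fin n) (Fin m) ℝ := D - Pr * D with hEdef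
  have hE0 : E = 0 := by
    have hEE : E * Eᵀ = 0 := by
      have expand : E * Eᵀ = D * Dᵀ - (D * Dᵀ) * Pr - Pr * (D * Dᵀ)
          + Pr * (D * Dᵀ) * Pr := by
        rw [hEdef, Matrix.transpose_sub, Matrix.transpose_mul, hPrsymm,
          Matrix.sub_mul, Matrix.mul_sub, Matrix.mul_sub]
        simp only [Matrix.mul_assoc]
        abel
      rw [expand, h, hPrCC, hCCPr]
      abel
    have : E * Eᴴ = 0 := by
      rwa [Matrix.conjTranspose_eq_transpose_of_trivial]
    exact Matrix.self_mul_conjTranspose_eq_zero.mp this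
  set P : Matrix (Fin m) (Fin m) ℝ := G⁻¹ * Cᵀ * D with hPdef
  have hDP : D = C * P := by
    have : D = Pr * D := by
      have := sub_eq_zero.mp (hEdef ▸ hE0)
      exact this
    rw [this, hPrdef, hPdef, Matrix.mul_assoc, Matrix.mul_assoc,
      Matrix.mul_assoc]
  have hPPt : P * Pᵀ = 1 := by
    have h1 : C * (P * (Pᵀ * Cᵀ)) = C * Cᵀ := by
      have h0 : C * P * (C * P)ᵀ = C * Cᵀ := by rw [← hDP]; exact h
      rwa [Matrix.transpose_mul, Matrix.mul_assoc] at h0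
    have h2 : Cᵀ * (C * (P * (Pᵀ * Cᵀ))) = Cᵀ * (C * Cᵀ) := by rw [h1]
    have h3 : G * (P * (Pᵀ * Cᵀ)) = G * Cᵀ := by
      rw [hGdef, Matrix.mul_assoc Cᵀ C (P * (Pᵀ * Cᵀ)), Matrix.mul_assoc Cᵀ C Cᵀ]
      exact h2
    have h4 : P * (Pᵀ * Cᵀ) = Cᵀ := by
      have h4' : G⁻¹ * (G * (P * (Pᵀ * Cᵀ))) = G⁻¹ * (G * Cᵀ) := by rw [h3]
      rwa [← Matrix.mul_assoc G⁻¹ G (P * (Pᵀ * Cᵀ)), ← Matrix.mul_assoc G⁻¹ G Cᵀ,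
        hGinv, Matrix.one_mul, Matrix.one_mul] at h4'
    have h5 : P * (Pᵀ * Cᵀ) * C = Cᵀ * C := by rw [h4]
    have h6 : P * Pᵀ * G = G := by
      rw [hGdef, ← Matrix.mul_assoc (P * Pᵀ) Cᵀ C, Matrix.mul_assoc P Pᵀ Cᵀ]
      exact h5
    have h7 : P * Pᵀ * G * G⁻¹ = G * G⁻¹ := by rw [h6]
    rwa [Matrix.mul_assoc, hGinv', Matrix.mul_one] at h7
  exact qlt_orth_eq hqC hqD hDP hPPt

/-- Observational equivalence for the classical simultaneous equations model:
if `(B,A)` and `(B̃,Ã)` both satisfy (CF-SEM) and produce the same covariance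
`B⁻¹AA'B⁻¹'`, then `B̃⁻¹Ã = B⁻¹A`. -/
theorem stmt11 {n m : ℕ}
    (B Bt : Matrix (Fin n) (Fin n) ℝ) (A At : Matrix (Fin n) (Fin m) ℝ)
    (hB : IsUnit B) (hBt : IsUnit Bt)
    (hrank : (B⁻¹ * A).rank = m) (hrankt : (Bt⁻¹ * At).rank = m)
    (hq : QLT (B⁻¹ * A)) (hqt : QLT (Bt⁻¹ * At))
    (h : (Bt⁻¹ * At) * (Bt⁻¹ * At)ᵀ = (B⁻¹ * A) * (B⁻¹ * A)ᵀ) :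
    Bt⁻¹ * At = B⁻¹ * A :=
  qlt_factor_unique (B⁻¹ * A) (Bt⁻¹ * At) hrank hq hqt h
end

section
/- If C and C̃ are n×m real matrices of rank m, both canonical quasi-lower triangular, and C C' = C̃ C̃', then C = C̃. -/
open Matrix

private lemma sum_term {m : ℕ} (j : Fin m) (F : Fin m → ℝ)
    (hj : ∀ b, b ≠ j → F b = 0) (hsum : ∑ b, F b = 0) : F j = 0 := by
  have h := Finset.sum_eq_single j (fun b _ hb => hj b hb)
    (fun hnot => absurd (Finset.mem_univ j) hnot)
  rw [h] at hsum
  exact hsum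

private lemma qlt_aux {n m : ℕ} (C Ct : Matrix (Fin n) (Fin m) ℝ) (f g : Fin m → Fin n)
    (hf : StrictMono f) (hg : StrictMono g)
    (hC : ∀ j, 0 < C (f j) j ∧ ∀ i, i < f j → C i j = 0)
    (hCt : ∀ j, 0 < Ct (g j) j ∧ ∀ i, i < g j → Ct i j = 0)
    (h : C * Cᵀ = Ct * Ctᵀ)
    (j : Fin m) (ih : ∀ j' < j, ∀ i, C i j' = Ct i j') : ¬ f j < g j := by
  intro hlt
  have hsum : ∑ b, C (f j) b * C (f j) b = ∑ b, Ct (f j) b * Ct (f j) b := by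
    have := congrFun (congrFun h (f j)) (f j)
    simpa [Matrix.mul_apply, Matrix.transpose_apply] using this
  have h0 : ∑ b, (C (f j) b * C (f j) b - Ct (f j) b * Ct (f j) b) = 0 := by
    rw [Finset.sum_sub_distrib, hsum, sub_self]
  have hterm : C (f j) j * C (f j) j - Ct (f j) j * Ct (f j) j = 0 := by
    refine sum_term j _ (fun b hb => ?_) h0
    rcases lt_or_gt_of_ne hb with hb | hb
    · rw [ih b hb (f j)]; ring
    · have h1 : C (f j) b = 0 := (hC b).2 (f j) (hf hb)
      have h2 : Ct (f j) b = 0 := (hCt b).2 (f j) (lt_trans hlt (hg hb))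
      rw [h1, h2]; ring
  have h2 : Ct (f j) j = 0 := (hCt j).2 (f j) hlt
  have h3 := (hC j).1
  nlinarith

/-- Uniqueness of the full-rank canonical quasi-lower triangular factor:
if `C`, `C̃` are `n×m` of rank `m`, both canonical quasi-lower triangular, and
`CC' = C̃C̃'`, then `C = C̃`. -/
theorem stmt12 {n m : ℕ} (C Ct : Matrix (Fin n) (Fin m) ℝ)
    (hC : C.rank = m) (hCt : Ct.rank = m) (hq : QLT C) (hqt : QLT Ct)
    (h : C * Cᵀ = Ct * Ctᵀ) : C = Ct := by
  obtain ⟨f, hf, hCp⟩ := hq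
  obtain ⟨g, hg, hCtp⟩ := hqt
  have hsum : ∀ i k : Fin n, ∑ b, C i b * C k b = ∑ b, Ct i b * Ct k b := by
    intro i k
    have := congrFun (congrFun h i) k
    simpa [Matrix.mul_apply, Matrix.transpose_apply] using this
  have hfg : ∀ j : Fin m, (∀ j' < j, ∀ i, C i j' = Ct i j') → f j = g j := by
    intro j ih
    have h1 := qlt_aux C Ct f g hf hg hCp hCtp h j ih
    have h2 := qlt_aux Ct C g f hg hf hCtp hCp h.symm j
      (fun j' hj' i => (ih j' hj' i).symm)
    exact le_antisymm (not_lt.1 h2) (not_lt.1 h1)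
  have main : ∀ k : ℕ, ∀ j : Fin m, j.val = k → ∀ i, C i j = Ct i j := by
    intro k
    induction k using Nat.strong_induction_on with
    | _ k IH =>
      intro j hjk i
      have ih : ∀ j' < j, ∀ i, C i j' = Ct i j' :=
        fun j' hj' i => IH j'.val (hjk ▸ hj') j' rfl i
      have hgj : g j = f j := (hfg j ih).symm
      -- diagonal entry equality
      have hd : C (f j) j * C (f j) j - Ct (f j) j * Ct (f j) j = 0 := by
        refine sum_term j (fun b => C (f j) b * C (f j) b - Ct (f j) b * Ct (f j) b)
          (fun b hb => ?_) ?_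
        · rcases lt_or_gt_of_ne hb with hb | hb
          · simp only [ih b hb (f j)]; ring
          · have h1 : C (f j) b = 0 := (hCp b).2 (f j) (hf hb)
            have h2 : Ct (f j) b = 0 := (hCtp b).2 (f j) (hgj ▸ hg hb)
            simp only [h1, h2]; ring
        · rw [Finset.sum_sub_distrib, hsum (f j) (f j), sub_self]
      have hpos := (hCp j).1
      have hpos' : 0 < Ct (f j) j := hgj ▸ (hCtp j).1
      have hdiag : C (f j) j = Ct (f j) j := by nlinarith
      -- off-diagonal
      have hoff : C i j * C (f j) j - Ct i j * Ct (f j) j = 0 := by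
        refine sum_term j (fun b => C i b * C (f j) b - Ct i b * Ct (f j) b)
          (fun b hb => ?_) ?_
        · rcases lt_or_gt_of_ne hb with hb | hb
          · simp only [ih b hb i, ih b hb (f j)]; ring
          · have h1 : C (f j) b = 0 := (hCp b).2 (f j) (hf hb)
            have h2 : Ct (f j) b = 0 := (hCtp b).2 (f j) (hgj ▸ hg hb)
            simp only [h1, h2]; ring
        · rw [Finset.sum_sub_distrib, hsum i (f j), sub_self]
      rw [← hdiag] at hoff
      have := mul_right_cancel₀ (ne_of_gt hpos) (by linarith : C i j * C (f j) j = Ct i j * C (f j) j)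
      exact this
  ext i j
  exact main j.val j rfl i
end

section
/- Let Ω^R be the set of pairs (B,A) with B ∈ GL(n,ℝ), B⁻¹A of rank m and canonical quasi-lower triangular, satisfying the affine restriction R vec([B A]) = u, where R ∈ ℝ^{r×n(n+m)} and u ∈ ℝ^r. Fix (B,A) ∈ Ω^R with C = B⁻¹A and P = [−C; I_m]. Then (B,A) is the unique element of Ω^R with B̃⁻¹Ã = B⁻¹A if and only if the stacked matrix M = [P' ⊗ I_n; R] has full column rank n(n+m). -/
/-!
Write `X = [B A]`, `C = B⁻¹A` and `P = [-C ; I_m]`, so that `(P' ⊗ I_n) vec X = vec (X P)` and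
`X P = A - B C`. For an invertible `B̃`, the condition `B̃⁻¹Ã = C` says exactly `[B̃ Ã] P = 0`, so
the observationally equivalent parameters satisfying the restrictions are the solutions `vec X̃`
of the affine system `M vec X̃ = (0, u)`, which `vec [B A]` solves. If `M` has full column rank
this solution is unique. Conversely, a non-zero `vec [D E]` in the kernel of `M` has `E = D C`,
and for small `c ≠ 0` the matrix `B + c D` is still invertible (`GL(n)` is open), so
`(B + c D, (B + c D) C)` is a second admissible parameter with the same `C`; it inherits the
rank and quasi-lower-triangularity conditions from `(B, A)` since these only concern `C`.
-/

open Matrix Kronecker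

/-- Column-stacking vectorization of an `n × c` matrix. -/
def vecM {n : ℕ} {c : Type*} (M : Matrix (Fin n) c ℝ) : c × Fin n → ℝ :=
  fun p => M p.2 p.1

theorem Matrix.rank_eq_card_iff_mulVec_injective {K m n : Type*} [Field K] [Fintype m]
    [Fintype n] (A : Matrix m n K) :
    A.rank = Fintype.card n ↔ Function.Injective A.mulVec := by
  rw [mulVec_injective_iff, linearIndependent_iff_card_eq_finrank_span,
    rank_eq_finrank_span_cols, eq_comm, Set.finrank]

theorem Matrix.exists_ne_zero_isUnit_add_smul {𝕜 ι : Type*} [NontriviallyNormedField 𝕜]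
    [Fintype ι] [DecidableEq ι] {B : Matrix ι ι 𝕜} (hB : IsUnit B) (D : Matrix ι ι 𝕜) :
    ∃ c : 𝕜, c ≠ 0 ∧ IsUnit (B + c • D) := by
  have hdet : ContinuousAt (fun c : 𝕜 => (B + c • D).det) 0 := by fun_prop
  have hdet0 : (B + (0 : 𝕜) • D).det ≠ 0 := by
    simpa using ((isUnit_iff_isUnit_det B).mp hB).ne_zero
  obtain ⟨c, hc, hcdet⟩ := (eventually_mem_nhdsWithin (a := (0 : 𝕜)) (s := {0}ᶜ) |>.and
    (eventually_nhdsWithin_of_eventually_nhds (hdet.eventually_ne hdet0))).exists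
  exact ⟨c, hc, (isUnit_iff_isUnit_det _).mpr (isUnit_iff_ne_zero.mpr hcdet)⟩

section vecM

variable {n : ℕ} {c : Type*}

theorem vecM_injective : Function.Injective (vecM : Matrix (Fin n) c ℝ → c × Fin n → ℝ) :=
  fun _ _ h => Matrix.ext fun i j => congrFun h (j, i)

theorem vecM_surjective : Function.Surjective (vecM : Matrix (Fin n) c ℝ → c × Fin n → ℝ) :=
  fun ξ => ⟨Matrix.of fun i j => ξ (j, i), rfl⟩

theorem kronecker_one_mulVec_vecM [Fintype c] {d : Type*} (P : Matrix c d ℝ)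
    (X : Matrix (Fin n) c ℝ) :
    (Pᵀ ⊗ₖ (1 : Matrix (Fin n) (Fin n) ℝ)) *ᵥ vecM X = vecM (X * P) := by
  ext ⟨j, i⟩
  simp only [mulVec, dotProduct, vecM, mul_apply, Fintype.sum_prod_type, kroneckerMap_apply,
    transpose_apply, one_apply]
  rw [Finset.sum_comm]
  simp [mul_ite, mul_comm]

end vecM

section Identification

variable {n m r : ℕ} (R : Matrix (Fin r) ((Fin n ⊕ Fin m) × Fin n) ℝ)
  (C : Matrix (Fin n) (Fin m) ℝ)

def identificationMatrix : Matrix (Fin m × Fin n ⊕ Fin r) ((Fin n ⊕ Fin m) × Fin n) ℝ :=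
  fromRows ((fromRows (-C) (1 : Matrix (Fin m) (Fin m) ℝ))ᵀ ⊗ₖ
    (1 : Matrix (Fin n) (Fin n) ℝ)) R

theorem identificationMatrix_mulVec_vecM_fromCols (X : Matrix (Fin n) (Fin n) ℝ)
    (Y : Matrix (Fin n) (Fin m) ℝ) :
    identificationMatrix R C *ᵥ vecM (fromCols X Y) =
      Sum.elim (vecM (Y - X * C)) (R *ᵥ vecM (fromCols X Y)) := by
  rw [identificationMatrix, fromRows_mulVec, kronecker_one_mulVec_vecM, fromCols_mul_fromRows,
    Matrix.mul_neg, Matrix.mul_one, neg_add_eq_sub]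

theorem eq_of_identificationMatrix_mulVec_injective
    (hinj : Function.Injective (identificationMatrix R C).mulVec)
    {X X' : Matrix (Fin n) (Fin n) ℝ} {Y Y' : Matrix (Fin n) (Fin m) ℝ}
    (hY : Y = X * C) (hY' : Y' = X' * C)
    (hR : R *ᵥ vecM (fromCols X Y) = R *ᵥ vecM (fromCols X' Y')) : X = X' ∧ Y = Y' := by
  rw [← fromCols_ext_iff]
  refine vecM_injective (hinj ?_)
  rw [identificationMatrix_mulVec_vecM_fromCols, identificationMatrix_mulVec_vecM_fromCols, hR,
    ← hY, ← hY', sub_self, sub_self]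

theorem identificationMatrix_mulVec_injective {B : Matrix (Fin n) (Fin n) ℝ} (hB : IsUnit B)
    (huniq : ∀ Bt : Matrix (Fin n) (Fin n) ℝ, IsUnit Bt →
      R *ᵥ vecM (fromCols Bt (Bt * C)) = R *ᵥ vecM (fromCols B (B * C)) → Bt = B) :
    Function.Injective (identificationMatrix R C).mulVec := by
  rw [← coe_mulVecLin, injective_iff_map_eq_zero]
  intro ξ hξ
  obtain ⟨X, rfl⟩ := vecM_surjective ξ
  rw [← fromCols_toCols X] at hξ ⊢
  set D := X.toCols₁
  set E := X.toCols₂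
  rw [coe_mulVecLin, identificationMatrix_mulVec_vecM_fromCols, ← Sum.elim_zero_zero,
    Sum.elim_eq_iff] at hξ
  obtain ⟨hEDC, hRDE⟩ := hξ
  have hE : E = D * C := sub_eq_zero.mp (vecM_injective hEDC)
  obtain ⟨c, hc, hBc⟩ := exists_ne_zero_isUnit_add_smul hB D
  have hperturb :
      fromCols (B + c • D) ((B + c • D) * C) = fromCols B (B * C) + c • fromCols D E := by
    rw [hE]
    ext i (j | j) <;> simp [Matrix.add_mul]
  have hBcB : B + c • D = B := huniq _ hBc <| by
    rw [hperturb, show vecM (fromCols B (B * C) + c • fromCols D E) =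
      vecM (fromCols B (B * C)) + c • vecM (fromCols D E) from rfl, mulVec_add, mulVec_smul, hRDE,
      smul_zero, add_zero]
  have hD : D = 0 := (smul_eq_zero.mp (add_eq_left.mp hBcB)).resolve_left hc
  rw [hE, hD, Matrix.zero_mul, fromCols_zero]
  rfl

end Identification

/-- Identification by affine restrictions in the simultaneous equations model:
with `C = B⁻¹A`, `P = [-C ; I_m]`, `(B,A)` is the unique parameter in `Ω^R`
(pairs satisfying (CF-SEM) and `R vec([B A]) = u`) observationally equivalent to it
(i.e. with `B̃⁻¹Ã = B⁻¹A`) iff `M = [P' ⊗ I_n ; R]` has full column rank `n(n+m)`. -/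
theorem stmt15 {n m r : ℕ}
    (R : Matrix (Fin r) ((Fin n ⊕ Fin m) × Fin n) ℝ) (u : Fin r → ℝ)
    (B : Matrix (Fin n) (Fin n) ℝ) (A : Matrix (Fin n) (Fin m) ℝ)
    (hB : IsUnit B) (hrank : (B⁻¹ * A).rank = m) (hq : QLT (B⁻¹ * A))
    (hres : R.mulVec (vecM (Matrix.fromCols B A)) = u) :
    (∀ (Bt : Matrix (Fin n) (Fin n) ℝ) (At : Matrix (Fin n) (Fin m) ℝ),
        IsUnit Bt → (Bt⁻¹ * At).rank = m → QLT (Bt⁻¹ * At) →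
        R.mulVec (vecM (Matrix.fromCols Bt At)) = u →
        Bt⁻¹ * At = B⁻¹ * A → Bt = B ∧ At = A) ↔
      (Matrix.fromRows
        (((Matrix.fromRows (-(B⁻¹ * A)) (1 : Matrix (Fin m) (Fin m) ℝ))ᵀ) ⊗ₖ
          (1 : Matrix (Fin n) (Fin n) ℝ)) R).rank = n * (n + m) := by
  set C := B⁻¹ * A
  have hA : A = B * C := (mul_nonsing_inv_cancel_left B A ((isUnit_iff_isUnit_det B).mp hB)).symm
  have hcard : n * (n + m) = Fintype.card ((Fin n ⊕ Fin m) × Fin n) := by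
    simp [Fintype.card_prod, Fintype.card_sum, mul_comm]
  change _ ↔ (identificationMatrix R C).rank = _
  rw [hcard, rank_eq_card_iff_mulVec_injective]
  constructor
  · intro huniq
    refine identificationMatrix_mulVec_injective R C hB fun Bt hBt hR => ?_
    have hC : Bt⁻¹ * (Bt * C) = C :=
      nonsing_inv_mul_cancel_left Bt _ ((isUnit_iff_isUnit_det Bt).mp hBt)
    exact (huniq Bt (Bt * C) hBt (by rwa [hC]) (by rwa [hC]) (hR.trans (hA ▸ hres)) hC).1
  · intro hinj Bt At hBt _ _ hRt hC
    refine eq_of_identificationMatrix_mulVec_injective R C hinj ?_ hA (hRt.trans hres.symm)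
    rw [← hC, mul_nonsing_inv_cancel_left Bt At ((isUnit_iff_isUnit_det Bt).mp hBt)]
end

section
/- Under the setting of the previous statement with restriction on a single equation i: R_i vec(e_i'[B A]) = u_i with R_i ∈ ℝ^{r×(n+m)}, the i-th row of every (B̃,Ã) ∈ Ω^R with B̃⁻¹Ã = B⁻¹A equals the i-th row of (B,A) if and only if M_i = [P'; R_i] has full column rank n+m. -/
/-!
With `C = B⁻¹A`, a pair with `B̃⁻¹Ã = C` has `Ã = B̃C`, so its `i`-th row is `b'[I C]` with
`b = e_i'B̃`; these vectors are exactly the kernel of `P'`. Hence the restriction pins the row down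
iff no nonzero `b'[I C]` is annihilated by `R_i`, i.e. iff `M_i` is injective. Conversely, a nonzero
such `b` is realised by moving the `i`-th row of `B` along `b`, with a step at which the
determinant, affine in the step, does not vanish.
-/

open Matrix

namespace Matrix

variable {K : Type*} [Field K] {l m n r : Type*} [Fintype n]

theorem rank_eq_card_iff_forall_mulVec_eq_zero (M : Matrix l n K) :
    M.rank = Fintype.card n ↔ ∀ v, M *ᵥ v = 0 → v = 0 := by
  have h := LinearMap.finrank_range_add_finrank_ker M.mulVecLin
  rw [Module.finrank_fintype_fun_eq_card] at h
  rw [← ker_mulVecLin_eq_bot_iff, ← Submodule.finrank_eq_zero, rank]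
  omega

variable [DecidableEq n]

theorem fromCols_mul_apply (X : Matrix l n K) (C : Matrix n m K) (i : l) :
    fromCols X (X * C) i = X i ᵥ* fromCols 1 C := by
  rw [← mul_apply_eq_vecMul, mul_fromCols, Matrix.mul_one]

theorem exists_ne_zero_isUnit_updateRow_add_smul [CharZero K] {B : Matrix n n K} (hB : IsUnit B)
    (i : n) (v : n → K) : ∃ ε ≠ (0 : K), IsUnit (B.updateRow i (B i + ε • v)) := by
  have hdet (ε : K) : (B.updateRow i (B i + ε • v)).det = B.det + ε * (B.updateRow i v).det := by
    rw [det_updateRow_add, det_updateRow_smul, updateRow_eq_self]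
  have hB' : B.det ≠ 0 := ((isUnit_iff_isUnit_det B).1 hB).ne_zero
  simp only [isUnit_iff_isUnit_det, isUnit_iff_ne_zero, hdet]
  by_cases h : B.det + (B.updateRow i v).det = 0
  · -- the determinant is affine in `ε` and vanishes at `ε = 1`, so it is `2 det B` at `ε = -1`
    refine ⟨-1, by norm_num, ?_⟩
    rw [eq_neg_of_add_eq_zero_right h]
    simpa [← two_mul] using hB'
  · exact ⟨1, one_ne_zero, by simpa using h⟩

variable [Fintype m]

theorem fromCols_mul_apply_eq_of_mulVec_eq {C : Matrix n m K} {R : Matrix r (n ⊕ m) K}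
    (hR : ∀ v : n → K, R *ᵥ (v ᵥ* fromCols 1 C) = 0 → v = 0) {X Y : Matrix l n K} {i : l}
    (hXY : R *ᵥ fromCols X (X * C) i = R *ᵥ fromCols Y (Y * C) i) :
    fromCols X (X * C) i = fromCols Y (Y * C) i := by
  rw [fromCols_mul_apply, fromCols_mul_apply] at hXY ⊢
  rw [sub_eq_zero.1 (hR (X i - Y i) (by rw [sub_vecMul, mulVec_sub, hXY, sub_self]))]

theorem exists_isUnit_fromCols_mul_apply_ne [CharZero K] {B : Matrix n n K} (hB : IsUnit B)
    (C : Matrix n m K) (R : Matrix r (n ⊕ m) K) (i : n) {v : n → K} (hv : v ≠ 0)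
    (hRv : R *ᵥ (v ᵥ* fromCols 1 C) = 0) :
    ∃ Bt : Matrix n n K, IsUnit Bt ∧
      R *ᵥ fromCols Bt (Bt * C) i = R *ᵥ fromCols B (B * C) i ∧
      fromCols Bt (Bt * C) i ≠ fromCols B (B * C) i := by
  obtain ⟨ε, hε, hBt⟩ := exists_ne_zero_isUnit_updateRow_add_smul hB i v
  refine ⟨_, hBt, ?_, ?_⟩ <;>
    rw [fromCols_mul_apply, fromCols_mul_apply, updateRow_self, add_vecMul, smul_vecMul]
  · rw [mulVec_add, mulVec_smul, hRv, smul_zero, add_zero]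
  · rw [Ne, add_eq_left, smul_eq_zero, not_or]
    exact ⟨hε, fun h ↦ hv (by simpa using congrArg (· ∘ Sum.inl) h)⟩

variable [DecidableEq m]

theorem vecMul_fromRows_neg_one_eq_zero_iff (C : Matrix n m K) (x : n ⊕ m → K) :
    x ᵥ* fromRows (-C) 1 = 0 ↔ x = x ∘ Sum.inl ᵥ* fromCols 1 C := by
  rw [vecMul_fromRows, vecMul_neg, vecMul_one, neg_add_eq_zero, vecMul_fromCols, vecMul_one]
  constructor
  · intro h
    ext (j | j)
    · rfl
    · exact (congrFun h j).symm
  · intro h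
    simpa using (congrArg (· ∘ Sum.inr) h).symm

theorem rank_fromRows_transpose_fromRows_neg_one_eq_iff (C : Matrix n m K)
    (R : Matrix r (n ⊕ m) K) :
    (fromRows (fromRows (-C) 1)ᵀ R).rank = Fintype.card n + Fintype.card m ↔
      ∀ v : n → K, R *ᵥ (v ᵥ* fromCols 1 C) = 0 → v = 0 := by
  rw [← Fintype.card_sum, rank_eq_card_iff_forall_mulVec_eq_zero]
  have hM (x : n ⊕ m → K) :
      fromRows (fromRows (-C) 1)ᵀ R *ᵥ x = 0 ↔ x ᵥ* fromRows (-C) 1 = 0 ∧ R *ᵥ x = 0 := by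
    rw [fromRows_mulVec, mulVec_transpose, ← Sum.elim_zero_zero, Sum.elim_eq_iff]
  simp only [hM, vecMul_fromRows_neg_one_eq_zero_iff, and_imp]
  constructor
  · intro h v hv
    simpa using congrArg (· ∘ Sum.inl) (h (v ᵥ* fromCols 1 C) (by simp) hv)
  · intro h x hx hRx
    rw [hx] at hRx ⊢
    rw [h _ hRx, zero_vecMul]

end Matrix

/-- Identification of the `i`-th equation by affine restrictions
`R_i vec(e_i'[B A]) = u_i`: with `C = B⁻¹A` and `P = [-C ; I_m]`, every `(B̃,Ã)` in the
restricted parameter space with `B̃⁻¹Ã = B⁻¹A` has the same `i`-th row of `[B̃ Ã]` as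
`(B,A)` iff `M_i = [P' ; R_i]` has full column rank `n + m`. -/
theorem stmt16 {n m r : ℕ} (i : Fin n)
    (Ri : Matrix (Fin r) (Fin n ⊕ Fin m) ℝ) (ui : Fin r → ℝ)
    (B : Matrix (Fin n) (Fin n) ℝ) (A : Matrix (Fin n) (Fin m) ℝ)
    (hB : IsUnit B) (hrank : (B⁻¹ * A).rank = m) (hq : QLT (B⁻¹ * A))
    (hres : Ri.mulVec ((Matrix.fromCols B A) i) = ui) :
    (∀ (Bt : Matrix (Fin n) (Fin n) ℝ) (At : Matrix (Fin n) (Fin m) ℝ),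
        IsUnit Bt → (Bt⁻¹ * At).rank = m → QLT (Bt⁻¹ * At) →
        Ri.mulVec ((Matrix.fromCols Bt At) i) = ui →
        Bt⁻¹ * At = B⁻¹ * A →
        (Matrix.fromCols Bt At) i = (Matrix.fromCols B A) i) ↔
      (Matrix.fromRows
        ((Matrix.fromRows (-(B⁻¹ * A)) (1 : Matrix (Fin m) (Fin m) ℝ))ᵀ) Ri).rank
        = n + m := by
  have hA : B * (B⁻¹ * A) = A := mul_nonsing_inv_cancel_left _ _ (B.isUnit_iff_isUnit_det.1 hB)
  rw [show n + m = Fintype.card (Fin n) + Fintype.card (Fin m) by simp,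
    rank_fromRows_transpose_fromRows_neg_one_eq_iff]
  constructor
  · intro hid v hRv
    by_contra hv
    obtain ⟨Bt, hBt, hR, hne⟩ := exists_isUnit_fromCols_mul_apply_ne hB (B⁻¹ * A) Ri i hv hRv
    have hC : Bt⁻¹ * (Bt * (B⁻¹ * A)) = B⁻¹ * A :=
      nonsing_inv_mul_cancel_left _ _ (Bt.isUnit_iff_isUnit_det.1 hBt)
    rw [hA] at hR hne
    exact hne (hid Bt _ hBt (by rwa [hC]) (by rwa [hC]) (hR.trans hres) hC)
  · intro hR Bt At hBt _ _ hresBt hC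
    have hAt : Bt * (B⁻¹ * A) = At := by
      rw [← hC, mul_nonsing_inv_cancel_left _ _ (Bt.isUnit_iff_isUnit_det.1 hBt)]
    rw [← hA] at hres ⊢
    rw [← hAt] at hresBt ⊢
    exact fromCols_mul_apply_eq_of_mulVec_eq hR (hresBt.trans hres.symm)
end
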